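/- Let K be a field of characteristic zero, (L,[·,·]) a Lie algebra over K, and c an element of the center of the derived subalgebra [L,L] (i.e., c ∈ [L,L] and [c,u] = 0 for all u ∈ [L,L]). Then the operation a ·_c b := [[a,c],b] is commutative, associative, and is a transposed Poisson structure on (L,[·,·]). -/

import Mathlib

/-!
Everything follows from `c` commuting with every bracket. The Jacobi identity for `a, c, b`
has its third term `⁅⁅b, a⁆, c⁆` vanish, which gives commutativity. A product `a ·_c b` is
itself a bracket, so `(a ·_c b) ·_c d = ⁅⁅a ·_c b, c⁆, d⁆ = 0`, and by commutativity all
products of three elements vanish. Finally `⁅a, c⁆` acts as a derivation whose value on a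
bracket is `⁅⁅a, c⁆, ⁅x, y⁆⁆ = 0`, so both sides of the transposed Leibniz rule are zero.
-/

open scoped Classical

noncomputable section

/-- A transposed Poisson structure on a Lie algebra `(L, ⁅·,·⁆)`: a bilinear, commutative,
associative product satisfying `2 • z · ⁅x, y⁆ = ⁅z · x, y⁆ + ⁅x, z · y⁆`. -/
def IsTPStructure (K L : Type*) [Field K] [LieRing L] [LieAlgebra K L]
    (mul : L →ₗ[K] L →ₗ[K] L) : Prop :=
  (∀ a b : L, mul a b = mul b a) ∧
  (∀ a b c : L, mul (mul a b) c = mul a (mul b c)) ∧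
  (∀ x y z : L, (2 : K) • mul z ⁅x, y⁆ = ⁅mul z x, y⁆ + ⁅x, mul z y⁆)

/-- The derived subalgebra `[L, L]` (the span of all brackets), as a `K`-submodule. -/
def derivedSpan (K L : Type*) [Field K] [LieRing L] [LieAlgebra K L] : Submodule K L :=
  Submodule.span K {z : L | ∃ a b : L, z = ⁅a, b⁆}

/-- The mutation product `a ·_c b = ⁅⁅a, c⁆, b⁆`, as a bilinear map. -/
def mutationMul (K L : Type*) [Field K] [LieRing L] [LieAlgebra K L] (c : L) :
    L →ₗ[K] L →ₗ[K] L where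
  toFun a :=
    { toFun := fun b => ⁅(⁅a, c⁆ : L), b⁆
      map_add' := fun b₁ b₂ => lie_add _ _ _
      map_smul' := fun k b => by simp }
  map_add' a₁ a₂ := by ext b; simp [add_lie]
  map_smul' k a := by ext b; simp [smul_lie]

section CentralizingBrackets

variable {L : Type*} [LieRing L] {c : L}

theorem lie_lie_eq_zero_of_forall_lie_lie (hc : ∀ a b : L, ⁅c, ⁅a, b⁆⁆ = 0) (a b : L) :
    ⁅⁅a, b⁆, c⁆ = 0 := by
  rw [← lie_skew, hc, neg_zero]

theorem lie_lie_comm_of_forall_lie_lie (hc : ∀ a b : L, ⁅c, ⁅a, b⁆⁆ = 0) (a b : L) :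
    ⁅⁅a, c⁆, b⁆ = ⁅⁅b, c⁆, a⁆ := by
  have jacobi := lie_jacobi a c b
  rw [hc, add_zero, add_comm] at jacobi
  rw [← lie_skew _ b, ← lie_skew _ a, ← lie_skew b c, lie_neg, neg_neg, neg_eq_iff_add_eq_zero,
    jacobi]

theorem lie_lie_lie_eq_zero_of_forall_lie_lie (hc : ∀ a b : L, ⁅c, ⁅a, b⁆⁆ = 0) (a x y : L) :
    ⁅⁅a, c⁆, ⁅x, y⁆⁆ = 0 := by
  rw [lie_lie, hc, lie_zero, zero_sub, ← lie_skew, lie_lie_eq_zero_of_forall_lie_lie hc,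
    neg_zero, neg_zero]

end CentralizingBrackets

section MutationMul

variable {K L : Type*} [Field K] [LieRing L] [LieAlgebra K L] {c : L}

theorem mutationMul_apply (a b : L) : mutationMul K L c a b = ⁅⁅a, c⁆, b⁆ := rfl

theorem mutationMul_comm (hc : ∀ a b : L, ⁅c, ⁅a, b⁆⁆ = 0) (a b : L) :
    mutationMul K L c a b = mutationMul K L c b a :=
  lie_lie_comm_of_forall_lie_lie hc a b

theorem mutationMul_mutationMul_left_eq_zero (hc : ∀ a b : L, ⁅c, ⁅a, b⁆⁆ = 0) (a b d : L) :
    mutationMul K L c (mutationMul K L c a b) d = 0 := by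
  rw [mutationMul_apply, mutationMul_apply, lie_lie_eq_zero_of_forall_lie_lie hc, zero_lie]

theorem mutationMul_lie_eq_zero (hc : ∀ a b : L, ⁅c, ⁅a, b⁆⁆ = 0) (z x y : L) :
    mutationMul K L c z ⁅x, y⁆ = 0 :=
  lie_lie_lie_eq_zero_of_forall_lie_lie hc z x y

theorem isTPStructure_mutationMul (hc : ∀ a b : L, ⁅c, ⁅a, b⁆⁆ = 0) :
    IsTPStructure K L (mutationMul K L c) := by
  refine ⟨mutationMul_comm hc, fun a b d => ?_, fun x y z => ?_⟩
  · rw [mutationMul_mutationMul_left_eq_zero hc, mutationMul_comm hc a,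
      mutationMul_mutationMul_left_eq_zero hc]
  · rw [mutationMul_lie_eq_zero hc, smul_zero, mutationMul_apply, mutationMul_apply,
      ← leibniz_lie, lie_lie_lie_eq_zero_of_forall_lie_lie hc]

end MutationMul

theorem statement3_general (K L : Type*) [Field K] [LieRing L] [LieAlgebra K L]
    (c : L) (hc2 : ∀ u ∈ derivedSpan K L, ⁅c, u⁆ = 0) :
    IsTPStructure K L (mutationMul K L c) :=
  isTPStructure_mutationMul fun a b => hc2 _ (Submodule.subset_span ⟨a, b, rfl⟩)

/-- for `c` in the center of the derived subalgebra `[L, L]`, the mutation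
`a ·_c b = ⁅⁅a, c⁆, b⁆` is commutative, associative and a transposed Poisson structure
on `(L, ⁅·,·⁆)`. -/
theorem statement3 (K L : Type*) [Field K] [CharZero K] [LieRing L] [LieAlgebra K L]
    (c : L) (hc1 : c ∈ derivedSpan K L) (hc2 : ∀ u ∈ derivedSpan K L, ⁅c, u⁆ = 0) :
    IsTPStructure K L (mutationMul K L c) :=
  statement3_general K L c hc2
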